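/- The point (139601/79360, 49√3/15) lies in the interior of the translated cone (1,3√3) + Cone((1,0),(−3/2,√3/2)). -/

import Mathlib

open MeasureTheory Real

theorem stmt : ∃ s t : ℝ, 0 < s ∧ 0 < t ∧
    ((139601/79360 : ℝ), (49 * Real.sqrt 3 / 15 : ℝ)) = ((1 : ℝ), (3 * Real.sqrt 3 : ℝ))
      + s • ((1 : ℝ), (0 : ℝ)) + t • ((-3/2 : ℝ), (Real.sqrt 3 / 2 : ℝ)) := by
  -- The second coordinate forces t/2 = 49/15 - 3, i.e. t = 8/15; the first then gives
  -- s = 139601/79360 - 1 + (3/2) t.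
  refine ⟨123729/79360, 8/15, by norm_num, by norm_num, ?_⟩
  ext
  · simp only [Prod.fst_add, Prod.smul_fst, smul_eq_mul]
    norm_num
  · simp only [Prod.snd_add, Prod.smul_snd, smul_eq_mul]
    ring
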